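/- Let α > 0, let U denote the uniform probability distribution on (0,1), and let n ≥ 1 be an integer. Then the n-fold Kendall convolution power of U satisfies U^{△_α n}([0,x)) = (α/(α+1))^n (1 + n/α) x^n for 0 ≤ x < 1, and U^{△_α n}([0,x)) = (1 − 1/((α+1)x^α))^{n−1} (1 + (n−1)/((α+1)x^α)) for x ≥ 1. -/

import Mathlib

open MeasureTheory Set

/-- The Pareto probability measure `π_{2α}` on `ℝ`, with density
`2α x^(-(2α+1)) 1_{(1,∞)}(x)` with respect to Lebesgue measure. -/
noncomputable def pareto (α : ℝ) : Measure ℝ :=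
  volume.withDensity
    (fun x => ENNReal.ofReal (if 1 < x then 2 * α * x ^ (-(2 * α) - 1) else 0))

/-- The Kendall probability kernel `ρ_{a,b} = (1 - (a/b)^α) δ_b + (a/b)^α T_b π_{2α}`
for `0 ≤ a ≤ b` (with `ρ_{0,0} = δ_0`). -/
noncomputable def kendallKernelLe (α a b : ℝ) : Measure ℝ :=
  if b = 0 then Measure.dirac 0
  else ENNReal.ofReal (1 - (a / b) ^ α) • Measure.dirac b
      + ENNReal.ofReal ((a / b) ^ α) • Measure.map (fun x => b * x) (pareto α)

/-- The Kendall kernel `ρ_{x,y}`, extended symmetrically. -/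
noncomputable def kendallKernel (α x y : ℝ) : Measure ℝ :=
  kendallKernelLe α (min x y) (max x y)

/-- The Kendall convolution `λ △_α ν`, defined by
`(λ △_α ν)(A) = ∫∫ ρ_{x,y}(A) λ(dx) ν(dy)`. -/
noncomputable def kendallConv (α : ℝ) (lam ν : Measure ℝ) : Measure ℝ :=
  lam.bind (fun x => ν.bind (fun y => kendallKernel α x y))

/-- The `n`-fold Kendall convolution power `ν^{△_α n}`, with `ν^{△_α 0} = δ_0`. -/
noncomputable def kendallPow (α : ℝ) (ν : Measure ℝ) : ℕ → Measure ℝ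
  | 0 => Measure.dirac 0
  | n + 1 => kendallConv α (kendallPow α ν n) ν

/-- The Kendall–Williamson transform `Φ_ν(t) = ∫ (1 - (t s)^α)_+ ν(ds)`. -/
noncomputable def williamson (α : ℝ) (ν : Measure ℝ) (t : ℝ) : ℝ :=
  ∫ s, max (1 - (t * s) ^ α) 0 ∂ν

/-!
For `x > 0` put `F_μ(x) = μ[0,x)` and `G_μ(x) = ∫_{[0,x)} (s/x)^α μ(ds)`. When `a, b < x` the
Kendall kernel gives `ρ_{a,b}[0,x) = 1 - (a/x)^α (b/x)^α` and
`∫_{[0,x)} (s/x)^α ρ_{a,b}(ds) = (a/x)^α + (b/x)^α - 2 (a/x)^α (b/x)^α`, and both vanish otherwise.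
Integrating in `a` and `b`, the pair `(F, G)` of `λ △_α ν` is
`(F_λ F_ν - G_λ G_ν, G_λ F_ν + F_λ G_ν - 2 G_λ G_ν)`. In particular `F - G`, the Williamson
transform at `1/x`, is multiplicative, and solving the recursion gives
`ν^{△_α n}[0,x) = (f - g)^(n-1) (f + (n-1) g)` with `f = F_ν(x)`, `g = G_ν(x)`.
For the uniform law `f = min(1,x)` and `g = min(1,x) (min(1,x)/x)^α / (α+1)`.
-/

open scoped ENNReal Interval

lemma rpow_div_le_one_of_le {α a b : ℝ} (hα : 0 ≤ α) (ha : 0 ≤ a) (hab : a ≤ b) :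
    (a / b) ^ α ≤ 1 :=
  Real.rpow_le_one (div_nonneg ha (ha.trans hab)) (div_le_one_of_le₀ hab (ha.trans hab)) hα

noncomputable def truncWeight (α x : ℝ) : ℝ → ℝ≥0∞ :=
  (Ico 0 x).indicator fun s => ENNReal.ofReal ((s / x) ^ α)

noncomputable def truncMoment (α : ℝ) (μ : Measure ℝ) (x : ℝ) : ℝ≥0∞ :=
  ∫⁻ s, truncWeight α x s ∂μ

@[fun_prop]
lemma measurable_truncWeight (α x : ℝ) : Measurable (truncWeight α x) :=
  Measurable.indicator (by fun_prop) measurableSet_Ico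

lemma truncMoment_le_measure_Ico {α : ℝ} (hα : 0 ≤ α) (μ : Measure ℝ) (x : ℝ) :
    truncMoment α μ x ≤ μ (Ico 0 x) := by
  rw [← lintegral_indicator_one measurableSet_Ico]
  refine lintegral_mono fun s => indicator_le_indicator' fun hs => ?_
  exact ENNReal.ofReal_le_one.2 (rpow_div_le_one_of_le hα hs.1 hs.2.le)

lemma truncMoment_map_const_mul {α q : ℝ} (μ : Measure ℝ) (hq : 0 < q) (x : ℝ) :
    truncMoment α (μ.map (q * ·)) x = truncMoment α μ (x / q) := by
  rw [truncMoment, lintegral_map (measurable_truncWeight α x) (measurable_const_mul q)]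
  congr 1 with t
  rw [truncWeight, ← indicator_comp_right, preimage_const_mul_Ico₀ _ _ hq, zero_div, truncWeight]
  congr 1 with s
  rw [Function.comp_apply, div_div_eq_mul_div, mul_comm s]

lemma pareto_eq_withDensity_restrict (α : ℝ) :
    pareto α = (volume.restrict (Ioi 1)).withDensity
      fun t => ENNReal.ofReal (2 * α * t ^ (-(2 * α) - 1)) := by
  rw [← withDensity_indicator measurableSet_Ioi, pareto]
  congr 1 with t
  by_cases ht : 1 < t <;> simp [ht]

instance (α : ℝ) : SFinite (pareto α) := by
  rw [pareto]
  infer_instance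

lemma pareto_Iic_one (α : ℝ) : pareto α (Iic 1) = 0 := by
  rw [pareto_eq_withDensity_restrict, withDensity_apply _ measurableSet_Iic,
    Measure.restrict_restrict measurableSet_Iic, Iic_inter_Ioi, Ioc_self, Measure.restrict_empty,
    lintegral_zero_measure]

lemma lintegral_Ico_rpow_pareto {α β y : ℝ} (hα : 0 < α) (hβ : β ≠ 2 * α) (hy : 1 ≤ y) :
    ∫⁻ t in Ico 0 y, ENNReal.ofReal (t ^ β) ∂pareto α
      = ENNReal.ofReal (2 * α / (2 * α - β) * (1 - y ^ (β - 2 * α))) := by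
  have h0 : (0 : ℝ) ∉ [[1, y]] := by
    rw [uIcc_of_le hy]
    exact fun h => by linarith [h.1]
  have hint : IntegrableOn (fun t : ℝ => 2 * α * t ^ (β - 2 * α - 1)) (Ioo 1 y) := by
    rw [← intervalIntegrable_iff_integrableOn_Ioo_of_le hy]
    exact (intervalIntegral.intervalIntegrable_rpow (Or.inr h0)).const_mul _
  have hset : Ico 0 y ∩ Ioi 1 = Ioo 1 y := by
    ext t
    simp only [mem_inter_iff, mem_Ioi, mem_Ico, mem_Ioo]
    grind
  have hdens : EqOn
      ((fun t => ENNReal.ofReal (2 * α * t ^ (-(2 * α) - 1))) * fun t => ENNReal.ofReal (t ^ β))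
      (fun t => ENNReal.ofReal (2 * α * t ^ (β - 2 * α - 1))) (Ioo 1 y) := fun t ht => by
    have : 0 < t := by linarith [ht.1]
    rw [Pi.mul_apply, ← ENNReal.ofReal_mul (by positivity), mul_assoc, ← Real.rpow_add this]
    ring_nf
  rw [pareto_eq_withDensity_restrict, restrict_withDensity measurableSet_Ico,
    lintegral_withDensity_eq_lintegral_mul _ (by fun_prop) (by fun_prop),
    Measure.restrict_restrict measurableSet_Ico, hset,
    setLIntegral_congr_fun measurableSet_Ioo hdens,
    ← ofReal_integral_eq_lintegral_ofReal hint (ae_restrict_of_forall_mem measurableSet_Ioo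
      fun t ht => mul_nonneg (by positivity) (Real.rpow_nonneg (by linarith [ht.1]) _)),
    ← integral_Ioc_eq_integral_Ioo, ← intervalIntegral.integral_of_le hy,
    intervalIntegral.integral_const_mul, integral_rpow (Or.inr ⟨fun h => hβ (by linarith), h0⟩),
    show β - 2 * α - 1 + 1 = β - 2 * α by ring, Real.one_rpow]
  have : 2 * α - β ≠ 0 := sub_ne_zero.2 hβ.symm
  congr 1
  field_simp
  ring

lemma pareto_Ico {α y : ℝ} (hα : 0 < α) (hy : 1 ≤ y) :
    pareto α (Ico 0 y) = ENNReal.ofReal (1 - (y⁻¹ ^ α) ^ 2) := by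
  have h := lintegral_Ico_rpow_pareto hα (β := 0) (by linarith) hy
  simp only [Real.rpow_zero, ENNReal.ofReal_one, lintegral_const, Measure.restrict_apply_univ,
    one_mul] at h
  rw [h, ← Real.rpow_mul_natCast (by positivity), Real.inv_rpow (by linarith),
    ← Real.rpow_neg (by linarith)]
  congr 1
  field_simp
  ring_nf

lemma truncMoment_pareto {α y : ℝ} (hα : 0 < α) (hy : 1 ≤ y) :
    truncMoment α (pareto α) y = ENNReal.ofReal (2 * y⁻¹ ^ α * (1 - y⁻¹ ^ α)) := by
  have hy0 : 0 < y := by linarith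
  have hsplit : EqOn (fun t => ENNReal.ofReal ((t / y) ^ α))
      (fun t => ENNReal.ofReal (t ^ α) * ENNReal.ofReal (y⁻¹ ^ α)) (Ico 0 y) := fun t ht => by
    dsimp only
    rw [← ENNReal.ofReal_mul (by have := ht.1; positivity), div_eq_mul_inv,
      Real.mul_rpow ht.1 (by positivity)]
  rw [truncMoment, truncWeight, lintegral_indicator measurableSet_Ico,
    setLIntegral_congr_fun measurableSet_Ico hsplit, lintegral_mul_const _ (by fun_prop),
    lintegral_Ico_rpow_pareto hα (by linarith) hy, ← ENNReal.ofReal_mul' (by positivity),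
    Real.inv_rpow hy0.le, ← Real.rpow_neg hy0.le, show α - 2 * α = -α by ring]
  congr 1
  field_simp
  ring

lemma kendallKernelLe_Iio {α p q : ℝ} (hq : 0 ≤ q) : kendallKernelLe α p q (Iio q) = 0 := by
  rcases hq.eq_or_lt with rfl | hq
  · simp [kendallKernelLe]
  · rw [kendallKernelLe, if_neg hq.ne', Measure.add_apply, Measure.smul_apply, Measure.smul_apply,
      Measure.map_apply (measurable_const_mul q) measurableSet_Iio, preimage_const_mul_Iio₀ _ hq,
      div_self hq.ne', measure_mono_null Iio_subset_Iic_self (pareto_Iic_one α)]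
    simp

lemma kendallKernelLe_Ico {α p q x : ℝ} (hα : 0 < α) (hp : 0 ≤ p) (hpq : p ≤ q) (hqx : q < x) :
    kendallKernelLe α p q (Ico 0 x) = ENNReal.ofReal (1 - (p / x) ^ α * (q / x) ^ α) := by
  rcases (hp.trans hpq).eq_or_lt with rfl | hq
  · obtain rfl : p = 0 := le_antisymm hpq hp
    simp [kendallKernelLe, hqx, Real.zero_rpow hα.ne']
  have hx : 0 < x := hq.trans hqx
  have hr := rpow_div_le_one_of_le hα.le hp hpq
  have hz := rpow_div_le_one_of_le hα.le hq.le hqx.le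
  have hrz : (p / q) ^ α * (q / x) ^ α = (p / x) ^ α := by
    rw [← Real.mul_rpow (by positivity) (by positivity), div_mul_div_cancel₀ hq.ne']
  rw [kendallKernelLe, if_neg hq.ne', Measure.add_apply, Measure.smul_apply, Measure.smul_apply,
    smul_eq_mul, smul_eq_mul, Measure.dirac_apply_of_mem (mem_Ico.2 ⟨hq.le, hqx⟩),
    Measure.map_apply (measurable_const_mul q) measurableSet_Ico, preimage_const_mul_Ico₀ _ _ hq,
    zero_div, pareto_Ico hα ((one_le_div hq).2 hqx.le), inv_div, mul_one,
    ← ENNReal.ofReal_mul (by positivity), ← ENNReal.ofReal_add (by linarith)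
      (mul_nonneg (by positivity) (sub_nonneg.2 (pow_le_one₀ (by positivity) hz))), ← hrz]
  congr 1
  ring

lemma truncMoment_kendallKernelLe {α p q x : ℝ} (hα : 0 < α) (hp : 0 ≤ p) (hpq : p ≤ q)
    (hqx : q < x) :
    truncMoment α (kendallKernelLe α p q) x
      = ENNReal.ofReal ((p / x) ^ α + (q / x) ^ α - 2 * ((p / x) ^ α * (q / x) ^ α)) := by
  rcases (hp.trans hpq).eq_or_lt with rfl | hq
  · obtain rfl : p = 0 := le_antisymm hpq hp
    rw [truncMoment, kendallKernelLe, if_pos rfl, lintegral_dirac]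
    simp [truncWeight, Real.zero_rpow hα.ne']
  have hx : 0 < x := hq.trans hqx
  have hr := rpow_div_le_one_of_le hα.le hp hpq
  have hz := rpow_div_le_one_of_le hα.le hq.le hqx.le
  have hrz : (p / q) ^ α * (q / x) ^ α = (p / x) ^ α := by
    rw [← Real.mul_rpow (by positivity) (by positivity), div_mul_div_cancel₀ hq.ne']
  rw [truncMoment, kendallKernelLe, if_neg hq.ne', lintegral_add_measure, lintegral_smul_measure,
    lintegral_smul_measure, lintegral_dirac, ← truncMoment, truncMoment_map_const_mul _ hq,
    truncMoment_pareto hα ((one_le_div hq).2 hqx.le), inv_div, truncWeight,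
    indicator_of_mem (mem_Ico.2 ⟨hq.le, hqx⟩), smul_eq_mul, smul_eq_mul,
    ← ENNReal.ofReal_mul (by linarith), ← ENNReal.ofReal_mul (by positivity),
    ← ENNReal.ofReal_add (mul_nonneg (by linarith) (by positivity))
      (mul_nonneg (by positivity) (mul_nonneg (by positivity) (by linarith))), ← hrz]
  congr 1
  ring

lemma kendallKernel_comm (α a b : ℝ) : kendallKernel α a b = kendallKernel α b a := by
  rw [kendallKernel, kendallKernel, min_comm, max_comm]

lemma kendallKernel_of_le {α a b : ℝ} (hab : a ≤ b) :
    kendallKernel α a b = kendallKernelLe α a b := by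
  rw [kendallKernel, min_eq_left hab, max_eq_right hab]

lemma kendallKernel_Ico_eq_zero {α a b x : ℝ} (hb : 0 ≤ b) (hab : a ≤ b) (hxb : x ≤ b) :
    kendallKernel α a b (Ico 0 x) = 0 := by
  rw [kendallKernel_of_le hab]
  exact measure_mono_null (fun s hs => lt_of_lt_of_le hs.2 hxb) (kendallKernelLe_Iio hb)

/- The two kernel identities are written with sums only, to avoid truncated subtraction
in `ℝ≥0∞`. -/
lemma kendallKernel_Ico_add_mul {α a b x : ℝ} (hα : 0 < α) (ha : 0 ≤ a) (hb : 0 ≤ b) :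
    kendallKernel α a b (Ico 0 x) + truncWeight α x a * truncWeight α x b
      = (Ico 0 x).indicator 1 a * (Ico 0 x).indicator 1 b := by
  wlog hab : a ≤ b generalizing a b
  · rw [kendallKernel_comm, mul_comm, mul_comm ((Ico 0 x).indicator 1 a)]
    exact this hb ha (le_of_not_ge hab)
  rcases lt_or_ge b x with hbx | hxb
  · have hx : 0 < x := hb.trans_lt hbx
    have hax : a ∈ Ico 0 x := ⟨ha, hab.trans_lt hbx⟩
    have hu := rpow_div_le_one_of_le hα.le ha hax.2.le
    have hv := rpow_div_le_one_of_le hα.le hb hbx.le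
    rw [kendallKernel_of_le hab, kendallKernelLe_Ico hα ha hab hbx, truncWeight,
      indicator_of_mem hax, indicator_of_mem (mem_Ico.2 ⟨hb, hbx⟩), indicator_of_mem hax,
      indicator_of_mem (mem_Ico.2 ⟨hb, hbx⟩), ← ENNReal.ofReal_mul (by positivity),
      ← ENNReal.ofReal_add (sub_nonneg.2 (mul_le_one₀ hu (by positivity) hv)) (by positivity)]
    simp
  · have hbx : b ∉ Ico 0 x := fun h => (not_lt.2 hxb) h.2
    rw [kendallKernel_Ico_eq_zero hb hab hxb, truncWeight, indicator_of_notMem hbx,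
      indicator_of_notMem hbx]
    simp

lemma truncMoment_kendallKernel_add {α a b x : ℝ} (hα : 0 < α) (ha : 0 ≤ a) (hb : 0 ≤ b) :
    truncMoment α (kendallKernel α a b) x + 2 * (truncWeight α x a * truncWeight α x b)
      = truncWeight α x a * (Ico 0 x).indicator 1 b
        + (Ico 0 x).indicator 1 a * truncWeight α x b := by
  wlog hab : a ≤ b generalizing a b
  · rw [kendallKernel_comm, mul_comm (truncWeight α x a), this hb ha (le_of_not_ge hab)]
    ring
  rcases lt_or_ge b x with hbx | hxb
  · have hx : 0 < x := hb.trans_lt hbx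
    have hax : a ∈ Ico 0 x := ⟨ha, hab.trans_lt hbx⟩
    have hu0 : 0 ≤ (a / x) ^ α := by positivity
    have hv0 : 0 ≤ (b / x) ^ α := by positivity
    have hu := rpow_div_le_one_of_le hα.le ha hax.2.le
    have hv := rpow_div_le_one_of_le hα.le hb hbx.le
    have huv : 0 ≤ (a / x) ^ α + (b / x) ^ α - 2 * ((a / x) ^ α * (b / x) ^ α) := by
      nlinarith [mul_nonneg hu0 (sub_nonneg.2 hv), mul_nonneg hv0 (sub_nonneg.2 hu)]
    rw [kendallKernel_of_le hab, truncMoment_kendallKernelLe hα ha hab hbx, truncWeight,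
      indicator_of_mem hax, indicator_of_mem (mem_Ico.2 ⟨hb, hbx⟩), indicator_of_mem hax,
      indicator_of_mem (mem_Ico.2 ⟨hb, hbx⟩)]
    simp only [Pi.one_apply, mul_one, one_mul]
    rw [← ENNReal.ofReal_mul hu0, ← ENNReal.ofReal_ofNat 2, ← ENNReal.ofReal_mul zero_le_two,
      ← ENNReal.ofReal_add huv (by positivity), ← ENNReal.ofReal_add hu0 hv0]
    congr 1
    ring
  · have hbx : b ∉ Ico 0 x := fun h => (not_lt.2 hxb) h.2
    have h0 : truncMoment α (kendallKernel α a b) x = 0 := nonpos_iff_eq_zero.1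
      ((truncMoment_le_measure_Ico hα.le _ x).trans_eq (kendallKernel_Ico_eq_zero hb hab hxb))
    rw [h0, truncWeight, indicator_of_notMem hbx, indicator_of_notMem hbx]
    simp

lemma Measurable.smul_measure_of_measurable {β γ : Type*} [MeasurableSpace β]
    [MeasurableSpace γ] {f : β → ℝ≥0∞} {μ : β → Measure γ} (hf : Measurable f) (hμ : Measurable μ) :
    Measurable fun b => f b • μ b :=
  Measure.measurable_of_measurable_coe _ fun _ hs => hf.mul ((Measure.measurable_coe hs).comp hμ)

lemma measurable_map_const_mul (μ : Measure ℝ) [SFinite μ] :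
    Measurable fun q : ℝ => μ.map (q * ·) := by
  have h : (fun q : ℝ => μ.map (q * ·))
      = fun q => (μ.map (Prod.mk q)).map fun p : ℝ × ℝ => p.1 * p.2 := by
    funext q
    rw [Measure.map_map (by fun_prop) measurable_prodMk_left]
    rfl
  rw [h]
  exact (Measure.measurable_map _ (by fun_prop)).comp Measurable.map_prodMk_left

lemma measurable_kendallKernelLe (α : ℝ) :
    Measurable fun p : ℝ × ℝ => kendallKernelLe α p.1 p.2 := by
  refine Measurable.ite (measurable_snd (measurableSet_singleton 0)) measurable_const
    (Measurable.add ?_ ?_) <;> refine Measurable.smul_measure_of_measurable (by fun_prop) ?_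
  · exact Measure.measurable_dirac.comp measurable_snd
  · exact (measurable_map_const_mul _).comp measurable_snd

lemma measurable_kendallKernel (α : ℝ) :
    Measurable fun p : ℝ × ℝ => kendallKernel α p.1 p.2 :=
  (measurable_kendallKernelLe α).comp <|
    (measurable_fst.min measurable_snd).prodMk (measurable_fst.max measurable_snd)

lemma lintegral_kendallConv (α : ℝ) (μ ν : Measure ℝ) [SFinite ν] {f : ℝ → ℝ≥0∞}
    (hf : Measurable f) :
    ∫⁻ s, f s ∂kendallConv α μ ν = ∫⁻ a, ∫⁻ b, ∫⁻ s, f s ∂kendallKernel α a b ∂ν ∂μ := by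
  have hρ (a : ℝ) : Measurable (kendallKernel α a) :=
    (measurable_kendallKernel α).comp measurable_prodMk_left
  have hbind : Measurable fun a => ν.bind (kendallKernel α a) :=
    Measure.measurable_of_measurable_coe _ fun s hs => by
      simp_rw [Measure.bind_apply hs (hρ _).aemeasurable]
      exact ((Measure.measurable_coe hs).comp (measurable_kendallKernel α)).lintegral_prod_right'
  rw [kendallConv, Measure.lintegral_bind hbind.aemeasurable hf.aemeasurable]
  exact lintegral_congr fun a => Measure.lintegral_bind (hρ a).aemeasurable hf.aemeasurable

lemma kendallConv_apply (α : ℝ) (μ ν : Measure ℝ) [SFinite ν] {s : Set ℝ} (hs : MeasurableSet s) :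
    kendallConv α μ ν s = ∫⁻ a, ∫⁻ b, kendallKernel α a b s ∂ν ∂μ := by
  simpa only [lintegral_indicator_one hs] using
    lintegral_kendallConv α μ ν (measurable_one.indicator hs)

section Convolution

variable {α : ℝ} {μ ν : Measure ℝ} [SFinite ν]

lemma ae_nonneg_kendallConv (hμ : ∀ᵐ a ∂μ, 0 ≤ a) (hν : ∀ᵐ b ∂ν, 0 ≤ b) :
    ∀ᵐ s ∂kendallConv α μ ν, 0 ≤ s := by
  have hneg : {s : ℝ | ¬0 ≤ s} = Iio 0 := by ext; simp
  rw [ae_iff, hneg, kendallConv_apply α μ ν measurableSet_Iio]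
  refine lintegral_eq_zero_of_ae_eq_zero (hμ.mono fun a ha => ?_)
  refine lintegral_eq_zero_of_ae_eq_zero (hν.mono fun b hb => ?_)
  exact measure_mono_null (Iio_subset_Iio (le_max_of_le_left ha))
    (kendallKernelLe_Iio (le_max_of_le_left ha))

lemma kendallConv_Ico_add_mul (hα : 0 < α) (hμ : ∀ᵐ a ∂μ, 0 ≤ a) (hν : ∀ᵐ b ∂ν, 0 ≤ b)
    (x : ℝ) :
    kendallConv α μ ν (Ico 0 x) + truncMoment α μ x * truncMoment α ν x
      = μ (Ico 0 x) * ν (Ico 0 x) := by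
  have he : Measurable ((Ico 0 x).indicator (1 : ℝ → ℝ≥0∞)) :=
    measurable_one.indicator measurableSet_Ico
  rw [kendallConv_apply α μ ν measurableSet_Ico, truncMoment, truncMoment,
    ← lintegral_lintegral_mul (by fun_prop) (by fun_prop),
    ← lintegral_indicator_one measurableSet_Ico, ← lintegral_indicator_one measurableSet_Ico,
    ← lintegral_lintegral_mul he.aemeasurable he.aemeasurable,
    ← lintegral_add_right _ (by fun_prop)]
  refine lintegral_congr_ae (hμ.mono fun a ha => ?_)
  dsimp only
  rw [← lintegral_add_right _ (by fun_prop)]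
  exact lintegral_congr_ae (hν.mono fun b hb => kendallKernel_Ico_add_mul hα ha hb)

lemma truncMoment_kendallConv_add (hα : 0 < α) (hμ : ∀ᵐ a ∂μ, 0 ≤ a) (hν : ∀ᵐ b ∂ν, 0 ≤ b)
    (x : ℝ) :
    truncMoment α (kendallConv α μ ν) x + 2 * (truncMoment α μ x * truncMoment α ν x)
      = truncMoment α μ x * ν (Ico 0 x) + μ (Ico 0 x) * truncMoment α ν x := by
  have he : Measurable ((Ico 0 x).indicator (1 : ℝ → ℝ≥0∞)) :=
    measurable_one.indicator measurableSet_Ico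
  have h2 : 2 * (truncMoment α μ x * truncMoment α ν x)
      = ∫⁻ a, ∫⁻ b, 2 * (truncWeight α x a * truncWeight α x b) ∂ν ∂μ := by
    simp_rw [← mul_assoc]
    rw [lintegral_lintegral_mul (by fun_prop) (by fun_prop), lintegral_const_mul _ (by fun_prop),
      truncMoment, truncMoment]
  have hr : truncMoment α μ x * ν (Ico 0 x) + μ (Ico 0 x) * truncMoment α ν x
      = ∫⁻ a, ∫⁻ b, (truncWeight α x a * (Ico 0 x).indicator 1 b
          + (Ico 0 x).indicator 1 a * truncWeight α x b) ∂ν ∂μ := by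
    rw [← lintegral_indicator_one measurableSet_Ico, ← lintegral_indicator_one measurableSet_Ico,
      truncMoment, truncMoment, ← lintegral_lintegral_mul (by fun_prop) he.aemeasurable,
      ← lintegral_lintegral_mul he.aemeasurable (by fun_prop), ← lintegral_add_left (by fun_prop)]
    exact lintegral_congr fun a => (lintegral_add_left (by fun_prop) _).symm
  rw [h2, hr, truncMoment, lintegral_kendallConv α μ ν (measurable_truncWeight α x),
    ← lintegral_add_right _ (by fun_prop)]
  refine lintegral_congr_ae (hμ.mono fun a ha => ?_)
  dsimp only
  rw [← lintegral_add_right _ (by fun_prop)]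
  exact lintegral_congr_ae (hν.mono fun b hb => truncMoment_kendallKernel_add hα ha hb)

end Convolution

lemma kendall_recurrence_solution {F G : ℕ → ℝ} {f g : ℝ} (hF0 : F 0 = 1) (hG0 : G 0 = 0)
    (hF : ∀ n, F (n + 1) = F n * f - G n * g)
    (hG : ∀ n, G (n + 1) = G n * f + F n * g - 2 * (G n * g)) (n : ℕ) :
    F (n + 1) = (f - g) ^ n * (f + n * g) ∧ G (n + 1) = (n + 1) * (f - g) ^ n * g := by
  induction n with
  | zero => simp [hF, hG, hF0, hG0]
  | succ n ih =>
    rw [hF (n + 1), hG (n + 1), ih.1, ih.2]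
    push_cast
    constructor <;> ring

lemma ENNReal.toReal_eq_toReal_sub_of_add_eq {a b c : ℝ≥0∞} (h : a + b = c) (hc : c ≠ ∞) :
    a.toReal = c.toReal - b.toReal := by
  rw [← h, ENNReal.toReal_add (ne_top_of_le_ne_top hc (h ▸ le_self_add))
    (ne_top_of_le_ne_top hc (h ▸ le_add_self))]
  ring

section Power

variable {α : ℝ} {ν : Measure ℝ}

lemma kendallPow_succ (α : ℝ) (ν : Measure ℝ) (n : ℕ) :
    kendallPow α ν (n + 1) = kendallConv α (kendallPow α ν n) ν := rfl

lemma ae_nonneg_kendallPow [SFinite ν] (hν : ∀ᵐ b ∂ν, 0 ≤ b) (n : ℕ) :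
    ∀ᵐ s ∂kendallPow α ν n, 0 ≤ s := by
  induction n with
  | zero => exact (ae_dirac_iff measurableSet_Ici).2 le_rfl
  | succ n ih => exact ae_nonneg_kendallConv ih hν

lemma kendallPow_Ico_ne_top [IsFiniteMeasure ν] (hα : 0 < α) (hν : ∀ᵐ b ∂ν, 0 ≤ b) (x : ℝ)
    (n : ℕ) : kendallPow α ν n (Ico 0 x) ≠ ∞ := by
  induction n with
  | zero => exact measure_ne_top (Measure.dirac 0) _
  | succ n ih =>
    refine ne_top_of_le_ne_top (ENNReal.mul_ne_top ih (measure_ne_top ν (Ico 0 x))) ?_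
    exact (kendallConv_Ico_add_mul hα (ae_nonneg_kendallPow hν n) hν x) ▸ le_self_add

theorem kendallPow_succ_Ico_toReal [IsFiniteMeasure ν] (hα : 0 < α) (hν : ∀ᵐ b ∂ν, 0 ≤ b)
    {x : ℝ} (hx : 0 < x) (n : ℕ) :
    (kendallPow α ν (n + 1) (Ico 0 x)).toReal
      = ((ν (Ico 0 x)).toReal - (truncMoment α ν x).toReal) ^ n
          * ((ν (Ico 0 x)).toReal + n * (truncMoment α ν x).toReal) := by
  have hF := kendallPow_Ico_ne_top hα hν x
  have hG n : truncMoment α (kendallPow α ν n) x ≠ ∞ :=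
    ne_top_of_le_ne_top (hF n) (truncMoment_le_measure_Ico hα.le _ x)
  have hf : ν (Ico 0 x) ≠ ∞ := measure_ne_top ν _
  have hg : truncMoment α ν x ≠ ∞ :=
    ne_top_of_le_ne_top hf (truncMoment_le_measure_Ico hα.le _ x)
  refine (kendall_recurrence_solution (F := fun n => (kendallPow α ν n (Ico 0 x)).toReal)
    (G := fun n => (truncMoment α (kendallPow α ν n) x).toReal) ?_ ?_ (fun n => ?_) (fun n => ?_)
    n).1
  · simp [kendallPow, hx]
  · rw [truncMoment, kendallPow, lintegral_dirac, truncWeight,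
      indicator_of_mem (mem_Ico.2 ⟨le_rfl, hx⟩), zero_div, Real.zero_rpow hα.ne']
    simp
  · have h := kendallConv_Ico_add_mul hα (ae_nonneg_kendallPow (α := α) hν n) hν x
    rw [kendallPow_succ,
      ENNReal.toReal_eq_toReal_sub_of_add_eq h (ENNReal.mul_ne_top (hF n) hf)]
    simp
  · have h := truncMoment_kendallConv_add hα (ae_nonneg_kendallPow (α := α) hν n) hν x
    rw [kendallPow_succ, ENNReal.toReal_eq_toReal_sub_of_add_eq h
      (ENNReal.add_ne_top.2 ⟨ENNReal.mul_ne_top (hG n) hf, ENNReal.mul_ne_top (hF n) hg⟩),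
      ENNReal.toReal_add (ENNReal.mul_ne_top (hG n) hf) (ENNReal.mul_ne_top (hF n) hg)]
    simp

end Power

lemma Ico_inter_Ioo_zero_one {x : ℝ} : Ico 0 x ∩ Ioo 0 1 = Ioo 0 (min 1 x) := by
  ext s
  simp only [mem_inter_iff, mem_Ico, mem_Ioo, lt_min_iff]
  grind

lemma restrict_Ioo_zero_one_Ico (x : ℝ) :
    volume.restrict (Ioo (0 : ℝ) 1) (Ico 0 x) = ENNReal.ofReal (min 1 x) := by
  rw [Measure.restrict_apply measurableSet_Ico, Ico_inter_Ioo_zero_one, Real.volume_Ioo, sub_zero]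

lemma truncMoment_restrict_Ioo_zero_one {α x : ℝ} (hα : 0 < α) (hx : 0 < x) :
    truncMoment α (volume.restrict (Ioo 0 1)) x
      = ENNReal.ofReal (min 1 x * (min 1 x / x) ^ α / (α + 1)) := by
  set m := min 1 x
  have hm : 0 < m := lt_min one_pos hx
  have hcont : Continuous fun s : ℝ => (s / x) ^ α :=
    (continuous_id.div_const x).rpow_const fun _ => Or.inr hα.le
  rw [truncMoment, truncWeight, lintegral_indicator measurableSet_Ico,
    Measure.restrict_restrict measurableSet_Ico, Ico_inter_Ioo_zero_one,
    ← ofReal_integral_eq_lintegral_ofReal (hcont.integrableOn_Icc.mono_set Ioo_subset_Icc_self)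
      (ae_restrict_of_forall_mem measurableSet_Ioo fun s hs => by have := hs.1; positivity),
    ← integral_Ioc_eq_integral_Ioo, ← intervalIntegral.integral_of_le hm.le,
    intervalIntegral.integral_comp_div (fun s => s ^ α) hx.ne',
    integral_rpow (Or.inl (by linarith)),
    zero_div, Real.zero_rpow (by linarith), Real.rpow_add_one (by positivity), smul_eq_mul]
  congr 1
  field_simp
  ring

lemma kendallPow_restrict_Ioo_zero_one_Ico {α x : ℝ} (hα : 0 < α) (hx : 0 < x) (n : ℕ) :
    (kendallPow α (volume.restrict (Ioo 0 1)) (n + 1) (Ico 0 x)).toReal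
      = (min 1 x - min 1 x * (min 1 x / x) ^ α / (α + 1)) ^ n
          * (min 1 x + n * (min 1 x * (min 1 x / x) ^ α / (α + 1))) := by
  have hU : ∀ᵐ b ∂volume.restrict (Ioo (0 : ℝ) 1), 0 ≤ b :=
    ae_restrict_of_forall_mem measurableSet_Ioo fun b hb => hb.1.le
  rw [kendallPow_succ_Ico_toReal hα hU hx n, restrict_Ioo_zero_one_Ico, truncMoment_restrict_Ioo_zero_one hα hx,
    ENNReal.toReal_ofReal (by positivity), ENNReal.toReal_ofReal (by positivity)]

theorem kendallPow_uniform_cdf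
    (α : ℝ) (hα : 0 < α) (n : ℕ) (hn : 1 ≤ n) (x : ℝ) :
    (0 ≤ x → x < 1 →
      ((kendallPow α (volume.restrict (Set.Ioo (0:ℝ) 1)) n) (Set.Ico 0 x)).toReal
        = (α / (α + 1)) ^ n * (1 + n / α) * x ^ n)
    ∧ (1 ≤ x →
      ((kendallPow α (volume.restrict (Set.Ioo (0:ℝ) 1)) n) (Set.Ico 0 x)).toReal
        = (1 - 1 / ((α + 1) * x ^ α)) ^ (n - 1)
            * (1 + ((n : ℝ) - 1) / ((α + 1) * x ^ α))) := by
  obtain ⟨m, rfl⟩ := Nat.exists_eq_add_of_le' hn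
  refine ⟨fun hx0 hx1 => ?_, fun hx1 => ?_⟩
  · rcases hx0.eq_or_lt with rfl | hx
    · simp
    rw [kendallPow_restrict_Ioo_zero_one_Ico hα hx, min_eq_right hx1.le, div_self hx.ne',
      Real.one_rpow, show x - x * 1 / (α + 1) = α / (α + 1) * x by field_simp; ring, mul_pow,
      pow_succ, pow_succ]
    push_cast
    field_simp
    ring
  · rw [kendallPow_restrict_Ioo_zero_one_Ico hα (by linarith), min_eq_left hx1,
      Real.div_rpow zero_le_one (by linarith), Real.one_rpow]
    push_cast
    field_simp
    ring
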